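/- arXiv:1309.4914 — 5 statements merged into one kernel-verified Lean document; each statement's English description precedes it below -/
import Mathlib

section
/- Let F_q be a finite field with q elements, let g and V be finite-dimensional F_q-vector spaces, let ϱ : g → End(V) be an F_q-linear map, and define the moment map μ : V × V* → g* by ⟨μ(v,w), X⟩ = w(ϱ(X)v) for v ∈ V, w ∈ V*, X ∈ g. Fix a nontrivial additive character Ψ : F_q → ℂ^×. Then for every ξ ∈ g*, the number of solutions of μ(v,w) = ξ satisfies the identity of complex numbers #{(v,w) ∈ V × V* : μ(v,w) = ξ} = |g|^{-1}·|V|·Σ_{X ∈ g} |ker(ϱ(X))|·Ψ(⟨X, ξ⟩). -/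
open Classical in
lemma sum_char_lin {F : Type*} [Field F] [Fintype F]
    {W : Type*} [AddCommGroup W] [Module F W] [Fintype W]
    (Ψ : AddChar F ℂ) (hΨ : Ψ ≠ 1) (φ : W →ₗ[F] F) :
    ∑ x : W, Ψ (φ x) = if φ = 0 then (Fintype.card W : ℂ) else 0 := by
  by_cases h : φ = 0
  · simp [h]
  · rw [if_neg h]
    have hφ : ∃ x : W, φ x ≠ 0 := by
      by_contra hc
      push_neg at hc
      exact h (LinearMap.ext fun x => by simp [hc x])
    obtain ⟨x0, hx0⟩ := hφ
    have := AddChar.sum_eq_zero_of_ne_one (R := W) (R' := ℂ)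
      (ψ := Ψ.compAddMonoidHom φ.toAddMonoidHom) ?_
    · simpa using this
    · rw [AddChar.ne_one_iff] at hΨ ⊢
      obtain ⟨a, ha⟩ := hΨ
      exact ⟨(a / φ x0) • x0, by simpa [div_mul_cancel₀ a hx0] using ha⟩

/-- **Arithmetic harmonic analysis / Fourier count of moment map fibers.**
Let `F = 𝔽_q` be a finite field, `g`, `V` finite-dimensional `F`-vector spaces,
`ϱ : g → End(V)` an `F`-linear map, and define the moment map
`μ : V × V* → g*` by `⟨μ(v,w), X⟩ = w(ϱ(X)v)`.  Fix a nontrivial additive character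
`Ψ : F → ℂˣ`.  Then for every `ξ ∈ g*`,
`#{(v,w) : μ(v,w) = ξ} = |g|⁻¹ · |V| · ∑_{X ∈ g} |ker ϱ(X)| · Ψ(⟨X, ξ⟩)`. -/
theorem moment_map_fiber_count
    {F : Type*} [Field F] [Fintype F]
    {g V : Type*} [AddCommGroup g] [Module F g] [FiniteDimensional F g] [Fintype g]
    [AddCommGroup V] [Module F V] [FiniteDimensional F V]
    (ϱ : g →ₗ[F] (V →ₗ[F] V))
    (Ψ : AddChar F ℂ) (hΨ : Ψ ≠ 1)
    (ξ : Module.Dual F g) :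
    (Nat.card {p : V × Module.Dual F V // ∀ X : g, p.2 (ϱ X p.1) = ξ X} : ℂ) =
      (Nat.card g : ℂ)⁻¹ * (Nat.card V : ℂ) *
        ∑ X : g, (Nat.card (LinearMap.ker (ϱ X)) : ℂ) * Ψ (ξ X) := by
  classical
  haveI : Finite V := Module.finite_of_finite F
  haveI : Fintype V := Fintype.ofFinite V
  haveI : Finite (Module.Dual F V) := Module.finite_of_finite F
  haveI : Fintype (Module.Dual F V) := Fintype.ofFinite _
  set μ : V × Module.Dual F V → Module.Dual F g := fun p =>
    { toFun := fun X => p.2 (ϱ X p.1)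
      map_add' := fun X Y => by simp
      map_smul' := fun c X => by simp } with hμ
  have hμapp : ∀ p X, μ p X = p.2 (ϱ X p.1) := fun _ _ => rfl
  -- Step 1: count via characters
  have step1 : (Nat.card {p : V × Module.Dual F V // ∀ X : g, p.2 (ϱ X p.1) = ξ X} : ℂ)
      * (Fintype.card g : ℂ)
      = ∑ p : V × Module.Dual F V, ∑ X : g, Ψ (p.2 (ϱ X p.1) - ξ X) := by
    have hind : ∀ p : V × Module.Dual F V,
        ∑ X : g, Ψ (p.2 (ϱ X p.1) - ξ X)
          = if (∀ X : g, p.2 (ϱ X p.1) = ξ X) then (Fintype.card g : ℂ) else 0 := by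
      intro p
      have h := sum_char_lin Ψ hΨ (μ p - ξ)
      simp only [LinearMap.sub_apply, hμapp] at h
      rw [h]
      congr 1
      rw [eq_iff_iff, LinearMap.ext_iff]
      constructor
      · intro hz X
        have := hz X
        simpa [LinearMap.sub_apply, hμapp, sub_eq_zero] using this
      · intro hz X
        simp [LinearMap.sub_apply, hμapp, sub_eq_zero, hz X]
    simp only [hind]
    rw [Finset.sum_ite, Finset.sum_const_zero, add_zero, Finset.sum_const, nsmul_eq_mul,
      Nat.card_eq_fintype_card, Fintype.card_subtype]
  -- orthogonality on the dual side
  have hw : ∀ u : V, ∑ w : Module.Dual F V, Ψ (w u)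
      = if u = 0 then (Fintype.card (Module.Dual F V) : ℂ) else 0 := by
    intro u
    have h := sum_char_lin Ψ hΨ (Module.Dual.eval F V u)
    simp only [Module.Dual.eval_apply] at h
    rw [h]
    congr 1
    rw [eq_iff_iff, LinearMap.ext_iff]
    simp only [Module.Dual.eval_apply, LinearMap.zero_apply]
    exact Module.forall_dual_apply_eq_zero_iff F u
  have hcardDual : (Fintype.card (Module.Dual F V) : ℂ) = (Fintype.card V : ℂ) := by
    exact_mod_cast congrArg Nat.cast
      (Fintype.card_congr (Module.Basis.ofVectorSpace F V).toDualEquiv.toEquiv).symm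
  have hker : ∀ X : g, ((Finset.univ.filter fun v : V => ϱ X v = 0).card : ℂ)
      = (Nat.card (LinearMap.ker (ϱ X)) : ℂ) := by
    intro X
    rw [Nat.card_eq_fintype_card, Fintype.card_subtype]
    norm_cast
  -- Step 2: evaluate the double sum
  have inner : ∀ X : g, ∑ p : V × Module.Dual F V, Ψ (p.2 (ϱ X p.1) - ξ X)
      = (Fintype.card V : ℂ) * ((Nat.card (LinearMap.ker (ϱ X)) : ℂ) * Ψ (-ξ X)) := by
    intro X
    rw [Fintype.sum_prod_type]
    have hsplit : ∀ v : V, ∑ w : Module.Dual F V, Ψ (w (ϱ X v) - ξ X)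
        = (∑ w : Module.Dual F V, Ψ (w (ϱ X v))) * Ψ (-ξ X) := by
      intro v
      rw [Finset.sum_mul]
      refine Finset.sum_congr rfl fun w _ => ?_
      rw [sub_eq_add_neg, AddChar.map_add_eq_mul]
    simp only [hsplit, hw]
    rw [← Finset.sum_mul, Finset.sum_ite, Finset.sum_const_zero, add_zero, Finset.sum_const,
      nsmul_eq_mul, hcardDual, hker, mul_assoc, mul_comm ((Nat.card (LinearMap.ker (ϱ X)) : ℂ))]
    ring
  have hkerneg : ∀ X : g, (Nat.card (LinearMap.ker (-(ϱ X))) : ℂ)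
      = (Nat.card (LinearMap.ker (ϱ X)) : ℂ) := by
    intro X
    have hk : LinearMap.ker (-(ϱ X)) = LinearMap.ker (ϱ X) := by
      ext v
      simp [LinearMap.mem_ker, neg_eq_zero]
    rw [hk]
  have step2 : ∑ p : V × Module.Dual F V, ∑ X : g, Ψ (p.2 (ϱ X p.1) - ξ X)
      = (Fintype.card V : ℂ) * ∑ X : g, (Nat.card (LinearMap.ker (ϱ X)) : ℂ) * Ψ (ξ X) := by
    rw [Finset.sum_comm]
    simp only [inner]
    rw [← Finset.mul_sum]
    congr 1
    refine Fintype.sum_equiv (Equiv.neg g) _ _ fun X => ?_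
    simp only [Equiv.neg_apply, map_neg, neg_neg, hkerneg]
  -- conclude
  have hgpos : (Fintype.card g : ℂ) ≠ 0 := by
    exact_mod_cast Fintype.card_ne_zero
  rw [mul_comm] at step1
  have key := (step1.trans step2).symm
  simp only [Nat.card_eq_fintype_card] at key ⊢
  rw [mul_assoc, key, inv_mul_cancel_left₀ hgpos]
end

section
/- Let F_q be a finite field with q elements and let r, n be nonnegative integers with r ≥ 1. The number of r-dimensional F_q-subspaces of an (n+r)-dimensional F_q-vector space equals the Gaussian binomial coefficient ∏_{j=1}^{r} (q^{n+j} − 1)/(q^{j} − 1). -/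
/-!
Count the linearly independent `r`-tuples in `V` in two ways. Directly there are
`∏_{i<r} (q^(n+r) - q^i)` of them. Grouped by their span, each `r`-dimensional subspace `W`
accounts for exactly the ordered bases of `W`, of which there are `∏_{i<r} (q^r - q^i)`.
Dividing, and cancelling `q^i` from the `i`-th factor, gives the Gaussian binomial coefficient.
-/

open Module Submodule

section SpanFibers

variable {K V : Type*} [DivisionRing K] [AddCommGroup V] [Module K V] [FiniteDimensional K V]

def linearIndependentSpanEqEquiv {k : ℕ} (W : Submodule K V) (hW : finrank K W = k) :
    {s : {t : Fin k → V // LinearIndependent K t} // span K (Set.range s.1) = W} ≃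
      {s : Fin k → W // LinearIndependent K s} where
  toFun s := ⟨fun i => ⟨s.1.1 i, s.2.le (subset_span (Set.mem_range_self i))⟩,
    s.1.2.of_comp W.subtype⟩
  invFun s := ⟨⟨W.subtype ∘ s.1, s.2.map' W.subtype W.ker_subtype⟩, by
    rw [Set.range_comp, ← map_span,
      s.2.span_eq_top_of_card_eq_finrank' (by simpa using hW.symm), Submodule.map_top,
      range_subtype]⟩
  left_inv _ := rfl
  right_inv _ := rfl

variable [Fintype K]

local notation "q" => Fintype.card K

theorem card_linearIndependent_span_eq {k : ℕ} (W : Submodule K V) (hW : finrank K W = k) :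
    Nat.card {s : {t : Fin k → V // LinearIndependent K t} // span K (Set.range s.1) = W} =
      ∏ i : Fin k, (q ^ k - q ^ (i : ℕ)) := by
  have : Finite V := Module.finite_of_finite K
  rw [Nat.card_congr (linearIndependentSpanEqEquiv W hW), card_linearIndependent hW.ge, hW]

theorem prod_card_pow_sub_pow_eq_card_submodule_mul {k : ℕ} (hk : k ≤ finrank K V) :
    ∏ i : Fin k, (q ^ finrank K V - q ^ (i : ℕ)) =
      Nat.card {W : Submodule K V // finrank K W = k} * ∏ i : Fin k, (q ^ k - q ^ (i : ℕ)) := by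
  have : Finite V := Module.finite_of_finite K
  let spanOf (s : {t : Fin k → V // LinearIndependent K t}) :
      {W : Submodule K V // finrank K W = k} :=
    ⟨span K (Set.range s.1), by rw [finrank_span_eq_card s.2, Fintype.card_fin]⟩
  have := Fintype.ofFinite {W : Submodule K V // finrank K W = k}
  rw [← card_linearIndependent hk, ← Nat.card_congr (Equiv.sigmaFiberEquiv spanOf),
    Nat.card_sigma]
  have hfiber (W : {W : Submodule K V // finrank K W = k}) :
      Nat.card {s // spanOf s = W} = ∏ i : Fin k, (q ^ k - q ^ (i : ℕ)) := by
    rw [Nat.card_congr (Equiv.subtypeEquivRight fun _ => Subtype.ext_iff),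
      card_linearIndependent_span_eq W.1 W.2]
  rw [Finset.sum_congr rfl fun W _ => hfiber W, Finset.sum_const, Finset.card_univ,
    Nat.card_eq_fintype_card, smul_eq_mul]

end SpanFibers

theorem Nat.cast_prod_pow_sub_pow {R : Type*} [CommRing R] {q : ℕ} (hq : q ≠ 0) {k m : ℕ}
    (hkm : k ≤ m) :
    ((∏ i : Fin k, (q ^ m - q ^ (i : ℕ)) : ℕ) : R) =
      ∏ i : Fin k, ((q : R) ^ m - (q : R) ^ (i : ℕ)) := by
  push_cast
  refine Finset.prod_congr rfl fun i _ => ?_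
  push_cast [Nat.pow_le_pow_right (Nat.pos_of_ne_zero hq) (i.isLt.le.trans hkm)]
  rfl

theorem prod_pow_sub_pow_div_pow_sub_pow {K : Type*} [Field K] {q : K} (hq : q ≠ 0) (n r : ℕ) :
    ∏ i : Fin r, (q ^ (n + r) - q ^ (i : ℕ)) / (q ^ r - q ^ (i : ℕ)) =
      ∏ j ∈ Finset.Icc 1 r, (q ^ (n + j) - 1) / (q ^ j - 1) := by
  have hfactor : ∀ i ∈ Finset.range r, (q ^ (n + r) - q ^ i) / (q ^ r - q ^ i) =
      (q ^ (n + (r - i)) - 1) / (q ^ (r - i) - 1) := by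
    intro i hi
    obtain ⟨j, rfl⟩ := Nat.exists_eq_add_of_le (Finset.mem_range.1 hi).le
    rw [Nat.add_sub_cancel_left, show n + (i + j) = i + (n + j) by ring, pow_add q i, pow_add q i,
      ← mul_sub_one, ← mul_sub_one, mul_div_mul_left _ _ (pow_ne_zero _ hq)]
  rw [Fin.prod_univ_eq_prod_range (fun i => (q ^ (n + r) - q ^ i) / (q ^ r - q ^ i)),
    Finset.prod_congr rfl hfactor, Finset.range_eq_Ico,
    Finset.prod_Ico_reflect (fun j => (q ^ (n + j) - 1) / (q ^ j - 1)) 0 r.le_succ]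
  simp only [Nat.add_sub_cancel_left, Nat.sub_zero, Finset.Ico_add_one_right_eq_Icc]

theorem card_grassmannian_general
    {F : Type*} [Field F] [Fintype F]
    {V : Type*} [AddCommGroup V] [Module F V] [FiniteDimensional F V]
    (r n : ℕ) (hdim : Module.finrank F V = n + r) :
    (Nat.card {W : Submodule F V // Module.finrank F W = r} : ℚ) =
      ∏ j ∈ Finset.Icc 1 r,
        ((Fintype.card F : ℚ) ^ (n + j) - 1) / ((Fintype.card F : ℚ) ^ j - 1) := by
  set q := Fintype.card F
  have hq : (1 : ℚ) < q := by exact_mod_cast Fintype.one_lt_card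
  have hcount := congrArg (Nat.cast : ℕ → ℚ)
    (prod_card_pow_sub_pow_eq_card_submodule_mul (K := F) (V := V) (k := r) (by omega))
  rw [hdim, Nat.cast_mul, Nat.cast_prod_pow_sub_pow Fintype.card_ne_zero (by omega),
    Nat.cast_prod_pow_sub_pow Fintype.card_ne_zero le_rfl] at hcount
  have hden : ∏ i : Fin r, ((q : ℚ) ^ r - (q : ℚ) ^ (i : ℕ)) ≠ 0 :=
    Finset.prod_ne_zero_iff.2 fun i _ => sub_ne_zero.2 (pow_lt_pow_right₀ hq i.isLt).ne'
  rw [← prod_pow_sub_pow_div_pow_sub_pow (by positivity) n r, Finset.prod_div_distrib, hcount,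
    mul_div_cancel_right₀ _ hden]

/-- The number of `r`-dimensional `𝔽_q`-subspaces of an `(n+r)`-dimensional
`𝔽_q`-vector space equals the Gaussian binomial coefficient
`∏_{j=1}^{r} (q^{n+j} − 1)/(q^{j} − 1)`. -/
theorem card_grassmannian
    {F : Type*} [Field F] [Fintype F]
    {V : Type*} [AddCommGroup V] [Module F V] [FiniteDimensional F V]
    (r n : ℕ) (hr : 1 ≤ r) (hdim : Module.finrank F V = n + r) :
    (Nat.card {W : Submodule F V // Module.finrank F W = r} : ℚ) =
      ∏ j ∈ Finset.Icc 1 r,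
        ((Fintype.card F : ℚ) ^ (n + j) - 1) / ((Fintype.card F : ℚ) ^ j - 1) :=
  card_grassmannian_general r n hdim
end

section
/- Fix an integer r ≥ 1 and for each integer n ≥ 1 define E_n(q) = ∏_{j=1}^{r} (q^{n+j} − 1)/(q^{j} − 1), the point count of the Grassmannian of r-planes in (n+r)-space. Then for every real number t ≠ 0, lim_{n→∞} (r!/n^r)·e^{−rt/2}·E_n(e^{t/n}) = ((e^{t/2} − e^{−t/2})/t)^r. -/
/-!
With `q = e^{t/n}` one has `q^{n+j} = e^t e^{jt/n}` and `q^j = e^{jt/n}`, so the `j`-th factor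
of `E_n(q)`, scaled by `j/n` and `e^{-t/2}`, equals
`e^{-t/2} (e^t e^{jt/n} - 1) / t · (jt/n) / (e^{jt/n} - 1)`, which tends to
`(e^{t/2} - e^{-t/2}) / t` because `x / (e^x - 1) → 1` as `x → 0`. The scalings `j/n`
multiply to `r!/n^r` and the `e^{-t/2}` to `e^{-rt/2}`.
-/

open Filter Topology Real

lemma tendsto_exp_sub_one_div_nhdsNE :
    Tendsto (fun x : ℝ => (exp x - 1) / x) (𝓝[≠] 0) (𝓝 1) := by
  have h := (hasDerivAt_iff_tendsto_slope_zero.mp (hasDerivAt_exp 0))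
  simpa [div_eq_inv_mul] using h

lemma tendsto_div_exp_sub_one_nhdsNE :
    Tendsto (fun x : ℝ => x / (exp x - 1)) (𝓝[≠] 0) (𝓝 1) := by
  simpa using tendsto_exp_sub_one_div_nhdsNE.inv₀ one_ne_zero

lemma tendsto_const_mul_nhdsNE {c : ℝ} (hc : c ≠ 0) :
    Tendsto (fun x : ℝ => c * x) (𝓝[≠] 0) (𝓝[≠] 0) := by
  refine tendsto_nhdsWithin_iff.mpr ⟨?_, ?_⟩
  · simpa using ((continuous_const_mul c).tendsto 0).mono_left nhdsWithin_le_nhds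
  · filter_upwards [self_mem_nhdsWithin] with x hx using mul_ne_zero hc hx

lemma tendsto_const_div_natCast_nhdsNE {c : ℝ} (hc : c ≠ 0) :
    Tendsto (fun n : ℕ => c / n) atTop (𝓝[≠] 0) := by
  refine tendsto_nhdsWithin_iff.mpr ⟨tendsto_const_div_atTop_nhds_zero_nat c, ?_⟩
  filter_upwards [eventually_ne_atTop 0] with n hn using div_ne_zero hc (Nat.cast_ne_zero.mpr hn)

lemma tendsto_mul_exp_add_sub_one_div_exp_sub_one (t : ℝ) {j : ℝ} (hj : j ≠ 0) :
    Tendsto (fun h => j * h / t * exp (-(t / 2)) * ((exp (t + j * h) - 1) / (exp (j * h) - 1)))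
      (𝓝[≠] 0) (𝓝 ((exp (t / 2) - exp (-(t / 2))) / t)) := by
  have hnum : Tendsto (fun h => exp (t + j * h) - 1) (𝓝[≠] 0) (𝓝 (exp t - 1)) := by
    refine tendsto_nhdsWithin_of_tendsto_nhds ?_
    have : Continuous (fun h => exp (t + j * h) - 1) := by fun_prop
    simpa using this.tendsto 0
  have hden := tendsto_div_exp_sub_one_nhdsNE.comp (tendsto_const_mul_nhdsNE hj)
  have hlim : exp (-(t / 2)) / t * (exp t - 1) * 1 = (exp (t / 2) - exp (-(t / 2))) / t := by
    rw [mul_one, div_mul_eq_mul_div, mul_sub, ← exp_add, mul_one]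
    ring_nf
  rw [← hlim]
  refine ((hnum.const_mul _).mul hden).congr fun h => ?_
  simp only [Function.comp_apply]
  ring

lemma grassmannian_factor_eq {t : ℝ} (ht : t ≠ 0) {n : ℕ} (hn : n ≠ 0) (j : ℕ) :
    (j : ℝ) / n * exp (-(t / 2)) * ((exp (t / n) ^ (n + j) - 1) / (exp (t / n) ^ j - 1)) =
      j * (t / n) / t * exp (-(t / 2)) *
        ((exp (t + j * (t / n)) - 1) / (exp (j * (t / n)) - 1)) := by
  have hn' : (n : ℝ) ≠ 0 := Nat.cast_ne_zero.mpr hn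
  rw [← exp_nat_mul, ← exp_nat_mul, Nat.cast_add, add_mul, mul_div_cancel₀ t hn']
  congr 2
  field_simp

lemma tendsto_grassmannian_factor {t : ℝ} (ht : t ≠ 0) {j : ℕ} (hj : j ≠ 0) :
    Tendsto (fun n : ℕ => (j : ℝ) / n * exp (-(t / 2)) *
        ((exp (t / n) ^ (n + j) - 1) / (exp (t / n) ^ j - 1)))
      atTop (𝓝 ((exp (t / 2) - exp (-(t / 2))) / t)) := by
  refine ((tendsto_mul_exp_add_sub_one_div_exp_sub_one t (Nat.cast_ne_zero.mpr hj)).comp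
    (tendsto_const_div_natCast_nhdsNE ht)).congr' ?_
  filter_upwards [eventually_ne_atTop 0] with n hn using (grassmannian_factor_eq ht hn j).symm

lemma factorial_div_pow_mul_pow_mul_prod (r : ℕ) (x a : ℝ) (f : ℕ → ℝ) :
    (r.factorial : ℝ) / x ^ r * a ^ r * ∏ j ∈ Finset.Icc 1 r, f j =
      ∏ j ∈ Finset.Icc 1 r, ((j : ℝ) / x * a * f j) := by
  rw [Finset.prod_mul_distrib, Finset.prod_mul_distrib, Finset.prod_div_distrib,
    Finset.prod_const, Finset.prod_const, Nat.card_Icc, add_tsub_cancel_right,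
    ← Nat.cast_prod, ← Finset.Ico_add_one_right_eq_Icc, Finset.prod_Ico_id_eq_factorial]

theorem grassmannian_count_limit_general (r : ℕ) (t : ℝ) (ht : t ≠ 0) :
    Tendsto (fun n : ℕ =>
        (r.factorial : ℝ) / (n : ℝ) ^ r * Real.exp (-(r * t / 2)) *
          ∏ j ∈ Finset.Icc 1 r,
            ((Real.exp (t / n)) ^ (n + j) - 1) / ((Real.exp (t / n)) ^ j - 1))
      atTop
      (nhds (((Real.exp (t / 2) - Real.exp (-(t / 2))) / t) ^ r)) := by
  have hprod := tendsto_finsetProd (Finset.Icc 1 r) fun j hj =>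
    tendsto_grassmannian_factor ht (Nat.one_le_iff_ne_zero.mp (Finset.mem_Icc.mp hj).1)
  rw [Finset.prod_const, Nat.card_Icc, add_tsub_cancel_right] at hprod
  refine hprod.congr fun n => ?_
  rw [show -(r * t / 2) = r * -(t / 2) by ring, exp_nat_mul,
    factorial_div_pow_mul_pow_mul_prod]

/-- Fix `r ≥ 1` and let `E_n(q) = ∏_{j=1}^{r} (q^{n+j} − 1)/(q^{j} − 1)` be the point
count of the Grassmannian of `r`-planes in `(n+r)`-space.  For every real `t ≠ 0`,
`lim_{n→∞} (r!/n^r)·e^{−rt/2}·E_n(e^{t/n}) = ((e^{t/2} − e^{−t/2})/t)^r`. -/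
theorem grassmannian_count_limit (r : ℕ) (hr : 1 ≤ r) (t : ℝ) (ht : t ≠ 0) :
    Tendsto (fun n : ℕ =>
        (r.factorial : ℝ) / (n : ℝ) ^ r * Real.exp (-(r * t / 2)) *
          ∏ j ∈ Finset.Icc 1 r,
            ((Real.exp (t / n)) ^ (n + j) - 1) / ((Real.exp (t / n)) ^ j - 1))
      atTop
      (nhds (((Real.exp (t / 2) - Real.exp (-(t / 2))) / t) ^ r)) :=
  grassmannian_count_limit_general r t ht
end

section
/- Let w = Σ_{n≥1} n^{n−1} T^n/n! ∈ ℚ⟦T⟧ be the tree function. Then w satisfies the functional equation T·exp(w) = w in ℚ⟦T⟧, where exp(w) denotes substitution of the constant-term-zero series w into the exponential series Σ_{k≥0} X^k/k!. -/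
/-!
Write `w = X · C` with `C = Σ (n+1)^(n-1) Tⁿ/n!`. By the chain rule `exp(w)` solves the linear
equation `y' = w' y` with `y(0) = 1`, whose solution is unique in characteristic zero, so it
suffices that `C` solves it as well. On coefficients, `C' = w' C` is Abel's identity
`Σ_{i+j=n} (n choose i) (i+1)^(i-1) (j+1)^j = (n+2)^n`, the value at `x = 1` of the polynomial
identity `Σ_{i+j=n} (n choose i) (i+1)^(i-1) (x+j)^j = (x+n+1)^n`. The latter follows by induction
on `n`: differentiating either side gives `n` times the corresponding side for `n - 1` at `x + 1`,
and at `x = -(n+1)` the left side is an `n`-th forward difference of a polynomial of degree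
`n - 1`, hence vanishes, as does the right side.
-/

/-- The tree function `w = Σ_{n≥1} n^{n−1} T^n/n! ∈ ℚ⟦T⟧`. -/
noncomputable def treeFunction : PowerSeries ℚ :=
  PowerSeries.mk fun n => if n = 0 then 0 else ((n : ℚ) ^ (n - 1)) / n.factorial

/-- Substitution of a power series `f` with zero constant term into the exponential
series `Σ_{k≥0} X^k/k!`: coefficientwise, `coeff n (exp f) = Σ_{k≤n} coeff n (f^k)/k!`
(the terms with `k > n` vanish since `f` has zero constant term). -/
noncomputable def expSubst (f : PowerSeries ℚ) : PowerSeries ℚ :=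
  PowerSeries.mk fun n =>
    ∑ k ∈ Finset.range (n + 1), (k.factorial : ℚ)⁻¹ • PowerSeries.coeff (R := ℚ) n (f ^ k)

open Finset

section Abel

open Polynomial

theorem sum_antidiagonal_neg_one_pow_mul_choose_mul_pow_eq_zero {R : Type*} [CommRing R]
    (x : R) {m j : ℕ} (h : j < m) :
    ∑ p ∈ antidiagonal m, (-1 : R) ^ p.2 * m.choose p.1 * (x + p.1) ^ j = 0 := by
  have hdiff := congrFun (fwdDiff_iter_pow_eq_zero_of_lt (R := R) h) x
  rw [fwdDiff_iter_eq_sum_shift, Pi.zero_apply] at hdiff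
  rw [Nat.sum_antidiagonal_eq_sum_range_succ_mk, ← hdiff]
  exact sum_congr rfl fun k _ => by simp [zsmul_eq_mul]

theorem Polynomial.eq_of_derivative_eq_of_eval_eq {R : Type*} [CommRing R] [IsAddTorsionFree R]
    {p q : R[X]} (x : R) (hd : derivative p = derivative q) (hx : p.eval x = q.eval x) :
    p = q := by
  have hconst := eq_C_of_derivative_eq_zero (p := p - q) (by rw [derivative_sub, hd, sub_self])
  have h0 : (p - q).coeff 0 = 0 := by
    simpa [hx] using (congrArg (eval x) hconst).symm
  rw [h0, map_zero] at hconst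
  exact sub_eq_zero.mp hconst

noncomputable def abelPolynomial (n : ℕ) : ℤ[X] :=
  ∑ p ∈ antidiagonal n, C (n.choose p.1 * (p.1 + 1 : ℤ) ^ (p.1 - 1)) * (X + (p.2 : ℤ[X])) ^ p.2

theorem derivative_abelPolynomial_succ (n : ℕ) :
    derivative (abelPolynomial (n + 1)) = (n + 1 : ℤ[X]) * (abelPolynomial n).comp (X + 1) := by
  rw [abelPolynomial, abelPolynomial, Nat.sum_antidiagonal_succ', map_add, map_sum,
    Polynomial.sum_comp, mul_sum]
  simp only [pow_zero, mul_one, derivative_C, zero_add, mul_comp, C_comp, pow_comp, add_comp,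
    X_comp, natCast_comp, derivative_C_mul, derivative_pow, derivative_add, derivative_X,
    derivative_natCast, add_zero]
  refine sum_congr rfl fun p hp => ?_
  obtain rfl := mem_antidiagonal.mp hp
  have hchoose : ((p.1 + p.2 + 1).choose p.1 : ℤ[X]) * (p.2 + 1) =
      (p.1 + p.2 + 1) * (p.1 + p.2).choose p.1 := by
    have := Nat.choose_mul_succ_eq (p.1 + p.2) p.1
    rw [show p.1 + p.2 + 1 - p.1 = p.2 + 1 by omega] at this
    exact_mod_cast this.symm.trans (mul_comm _ _)
  simp only [map_mul, map_natCast, map_pow, map_add, map_one, Nat.add_sub_cancel]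
  push_cast
  linear_combination ((p.1 + 1 : ℤ[X]) ^ (p.1 - 1) * (X + ((p.2 : ℤ[X]) + 1)) ^ p.2) * hchoose

theorem eval_abelPolynomial_succ (n : ℕ) : (abelPolynomial (n + 1)).eval (-(n + 2 : ℤ)) = 0 := by
  rw [abelPolynomial, eval_finsetSum,
    ← sum_antidiagonal_neg_one_pow_mul_choose_mul_pow_eq_zero (1 : ℤ) (lt_add_one n)]
  refine sum_congr rfl fun p hp => ?_
  have hsum := mem_antidiagonal.mp hp
  simp only [eval_mul, eval_C, eval_pow, eval_add, eval_X, eval_natCast]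
  have hroot : -(n + 2 : ℤ) + p.2 = -1 * (1 + p.1) := by
    have : (p.1 : ℤ) + p.2 = n + 1 := by exact_mod_cast hsum
    linear_combination this
  rw [hroot, mul_pow]
  rcases p with ⟨_ | i, j⟩
  · obtain rfl : j = n + 1 := by simpa using hsum
    simp
  · obtain rfl : n = i + j := by simp at hsum; omega
    simp only [Nat.add_sub_cancel]
    push_cast
    ring

theorem abelPolynomial_eq (n : ℕ) : abelPolynomial n = (X + (n + 1 : ℤ[X])) ^ n := by
  induction n with
  | zero => simp [abelPolynomial]
  | succ n ih =>
    refine eq_of_derivative_eq_of_eval_eq (-(n + 2 : ℤ)) ?_ ?_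
    · rw [derivative_abelPolynomial_succ, ih, derivative_pow]
      simp only [pow_comp, add_comp, X_comp, natCast_comp, one_comp, derivative_add, derivative_X,
        derivative_natCast, derivative_one, map_natCast]
      push_cast
      ring
    · rw [eval_abelPolynomial_succ, eval_pow, eval_add, eval_X, eval_add, eval_natCast, eval_one]
      push_cast
      ring

theorem sum_antidiagonal_choose_mul_succ_pow (n : ℕ) :
    ∑ p ∈ antidiagonal n, n.choose p.1 * (p.1 + 1) ^ (p.1 - 1) * (p.2 + 1) ^ p.2 = (n + 2) ^ n := by
  have h := congrArg (eval 1) (abelPolynomial_eq n)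
  simp only [abelPolynomial, eval_finsetSum, eval_mul, eval_C, eval_pow, eval_add, eval_X,
    eval_natCast, eval_one] at h
  zify
  rw [show (n + 2 : ℤ) = 1 + (n + 1) by ring, ← h]
  exact sum_congr rfl fun p _ => by ring

end Abel

theorem div_factorial_mul_div_factorial {K : Type*} [Field K] [CharZero K] (a b : K) (i j : ℕ) :
    a / i.factorial * (b / j.factorial) = (i + j).choose i * a * b / (i + j).factorial := by
  have : ((i + j).factorial : K) ≠ 0 := Nat.cast_ne_zero.mpr (Nat.factorial_ne_zero _)
  rw [Nat.cast_add_choose]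
  field_simp

namespace PowerSeries

theorem eq_of_derivative_eq_mul {R : Type*} [CommRing R] [IsAddTorsionFree R]
    {a f g : PowerSeries R} (hf : d⁄dX R f = a * f) (hg : d⁄dX R g = a * g)
    (h0 : constantCoeff f = constantCoeff g) : f = g := by
  ext n
  induction n using Nat.strong_induction_on with
  | _ n ih =>
    cases n with
    | zero => simpa using h0
    | succ n =>
      have h : coeff n (d⁄dX R f) = coeff n (d⁄dX R g) := by
        rw [hf, hg, coeff_mul, coeff_mul]
        refine sum_congr rfl fun p hp => ?_
        rw [ih p.2 (by have := mem_antidiagonal.mp hp; omega)]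
      rw [coeff_derivative, coeff_derivative, ← Nat.cast_succ, mul_comm, ← nsmul_eq_mul,
        mul_comm, ← nsmul_eq_mul] at h
      exact (smul_right_inj n.succ_ne_zero).mp h

theorem coeff_pow_eq_zero_of_lt {R : Type*} [CommSemiring R] {f : PowerSeries R}
    (hf : constantCoeff f = 0) {n k : ℕ} (h : n < k) : coeff n (f ^ k) = 0 :=
  X_pow_dvd_iff.mp (pow_dvd_pow_of_dvd (X_dvd_iff.mpr hf) k) n h

theorem expSubst_eq_subst_exp {f : PowerSeries ℚ} (hf : constantCoeff f = 0) :
    expSubst f = (exp ℚ).subst f := by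
  ext n
  have hcoeff (k : ℕ) : coeff k (exp ℚ) = (k.factorial : ℚ)⁻¹ := by simp [coeff_exp]
  rw [expSubst, coeff_mk, coeff_subst' (HasSubst.of_constantCoeff_zero' hf)]
  simp only [hcoeff]
  refine (finsum_eq_sum_of_support_subset _ fun k hk => ?_).symm
  by_contra hkn
  exact hk (by simp [coeff_pow_eq_zero_of_lt hf (n := n) (k := k) (by simpa using hkn)])

theorem derivative_expSubst {f : PowerSeries ℚ} (hf : constantCoeff f = 0) :
    d⁄dX ℚ (expSubst f) = d⁄dX ℚ f * expSubst f := by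
  rw [expSubst_eq_subst_exp hf, derivative_subst (HasSubst.of_constantCoeff_zero' hf),
    derivative_exp, mul_comm]

end PowerSeries

section TreeFunction

open PowerSeries

-- `(n + 1) ^ (n - 1)` is Cayley's number of labelled trees on `n + 1` vertices.
noncomputable def cayleySeries : PowerSeries ℚ :=
  mk fun n => ((n : ℚ) + 1) ^ (n - 1) / n.factorial

theorem X_mul_cayleySeries : X * cayleySeries = treeFunction := by
  ext (_ | n)
  · simp [treeFunction]
  · rw [coeff_succ_X_mul, cayleySeries, treeFunction, coeff_mk, coeff_mk, if_neg n.succ_ne_zero,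
      Nat.factorial_succ]
    rcases n with _ | n
    · simp
    · push_cast
      field_simp
      ring

theorem constantCoeff_treeFunction : constantCoeff treeFunction = 0 := by
  simp [treeFunction, ← coeff_zero_eq_constantCoeff_apply]

theorem coeff_derivative_treeFunction (n : ℕ) :
    coeff n (d⁄dX ℚ treeFunction) = ((n : ℚ) + 1) ^ n / n.factorial := by
  rw [coeff_derivative, treeFunction, coeff_mk, if_neg n.succ_ne_zero, Nat.factorial_succ]
  push_cast
  field_simp

theorem derivative_cayleySeries : d⁄dX ℚ cayleySeries = d⁄dX ℚ treeFunction * cayleySeries := by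
  ext n
  rw [mul_comm, coeff_mul, coeff_derivative]
  simp only [coeff_derivative_treeFunction, cayleySeries, coeff_mk]
  rw [sum_congr rfl fun p hp => by rw [div_factorial_mul_div_factorial, mem_antidiagonal.mp hp],
    ← sum_div]
  have habel : ∑ p ∈ antidiagonal n,
      (n.choose p.1 : ℚ) * (p.1 + 1) ^ (p.1 - 1) * (p.2 + 1) ^ p.2 = (n + 2) ^ n := by
    exact_mod_cast sum_antidiagonal_choose_mul_succ_pow n
  rw [habel, Nat.add_sub_cancel, Nat.factorial_succ]
  push_cast
  field_simp
  ring

theorem expSubst_treeFunction : expSubst treeFunction = cayleySeries :=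
  eq_of_derivative_eq_mul (derivative_expSubst constantCoeff_treeFunction) derivative_cayleySeries
    (by simp only [← coeff_zero_eq_constantCoeff_apply, expSubst, cayleySeries, coeff_mk]; simp)

end TreeFunction

/-- The tree function satisfies the functional equation `T·exp(w) = w` in `ℚ⟦T⟧`. -/
theorem treeFunction_functional_equation :
    PowerSeries.X * expSubst treeFunction = treeFunction := by
  rw [expSubst_treeFunction, X_mul_cayleySeries]
end

section
/- For integers n ≥ 1 and k ≥ 0 let γ_{n,k} ∈ ℚ be the coefficient of t^k in the formal power series ((e^t − 1)/t)^{n−1} ∈ ℚ⟦t⟧. Then for every fixed k ≥ 0, lim_{n→∞} γ_{n,k} / n^k = 1/(2^k · k!). -/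
/-!
Write a power series with constant coefficient `1` as `f = 1 + X g`. The binomial theorem gives
`[t^k] f^m = ∑_{i ≤ k} C(m, i) [t^(k-i)] g^i`, a polynomial in `m` of degree at most `k` whose
`m^k`-coefficient comes from `i = k` alone and equals `g(0)^k / k! = ([t] f)^k / k!`.
For `f = (e^t − 1)/t` one has `[t] f = 1/2`.
-/

open Filter

/-- The formal power series `(e^t − 1)/t = Σ_{j≥0} t^j/(j+1)! ∈ ℚ⟦t⟧`. -/
noncomputable def expm1DivT : PowerSeries ℚ :=
  PowerSeries.mk fun j => ((j + 1).factorial : ℚ)⁻¹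

open Finset Asymptotics Topology PowerSeries

theorem PowerSeries.coeff_one_add_X_mul_pow {R : Type*} [CommSemiring R] (f : R⟦X⟧) (k m : ℕ) :
    coeff k ((1 + X * f) ^ m) = ∑ i ∈ range (k + 1), (m.choose i : R) * coeff (k - i) (f ^ i) := by
  let a i := (m.choose i : R) * if i ≤ k then coeff (k - i) (f ^ i) else 0
  calc coeff k ((1 + X * f) ^ m)
      = ∑ i ∈ range (m + 1), a i := by
        rw [add_comm, add_pow, map_sum]
        refine sum_congr rfl fun i _ => ?_
        rw [one_pow, mul_one, mul_comm, ← map_natCast C, coeff_C_mul, mul_pow, coeff_X_pow_mul']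
    _ = ∑ i ∈ range (m + k + 1), a i :=
        sum_subset (range_subset_range.2 (by omega)) fun i _ hi => by
          simp [a, Nat.choose_eq_zero_of_lt (show m < i by simpa using hi)]
    _ = ∑ i ∈ range (k + 1), a i :=
        (sum_subset (range_subset_range.2 (by omega)) fun i _ hi => by simp_all [a]).symm
    _ = _ := sum_congr rfl fun i hi => by simp_all [a]

theorem tendsto_choose_div_pow_self (k : ℕ) :
    Tendsto (fun m : ℕ => (m.choose k : ℝ) / (m : ℝ) ^ k) atTop (𝓝 (k.factorial : ℝ)⁻¹) := by
  have hequiv := (isEquivalent_choose k).div (IsEquivalent.refl (u := fun m : ℕ => (m : ℝ) ^ k))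
  refine hequiv.tendsto_nhds_iff.2 (tendsto_const_nhds.congr' ?_)
  filter_upwards [eventually_ne_atTop 0] with m hm
  simp [field]

theorem tendsto_choose_div_pow_of_lt {i k : ℕ} (hik : i < k) :
    Tendsto (fun m : ℕ => (m.choose i : ℝ) / (m : ℝ) ^ k) atTop (𝓝 0) :=
  ((isTheta_choose i).isBigO.trans_isLittleO
    ((isLittleO_pow_pow_atTop_of_lt hik).comp_tendsto tendsto_natCast_atTop_atTop)).tendsto_div_nhds_zero

theorem tendsto_sum_choose_mul_div_pow (c : ℕ → ℝ) (k : ℕ) :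
    Tendsto (fun m : ℕ => (∑ i ∈ range (k + 1), (m.choose i : ℝ) * c i) / (m : ℝ) ^ k) atTop
      (𝓝 (c k / k.factorial)) := by
  simp_rw [sum_range_succ, add_div, sum_div, mul_div_right_comm _ (c _)]
  have hlower : Tendsto (fun m : ℕ => ∑ i ∈ range k, (m.choose i : ℝ) / (m : ℝ) ^ k * c i) atTop
      (𝓝 0) := by
    simpa using tendsto_finsetSum (range k) fun i hi =>
      (tendsto_choose_div_pow_of_lt (mem_range.1 hi)).mul_const (c i)
  simpa [div_eq_inv_mul] using hlower.add ((tendsto_choose_div_pow_self k).mul_const (c k))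

theorem PowerSeries.tendsto_coeff_pow_div_pow {f : ℚ⟦X⟧} (hf : constantCoeff f = 1) (k : ℕ) :
    Tendsto (fun m : ℕ => ((coeff k (f ^ m) : ℚ) : ℝ) / (m : ℝ) ^ k) atTop
      (𝓝 (((coeff 1 f : ℚ) : ℝ) ^ k / k.factorial)) := by
  obtain ⟨g, hg⟩ : X ∣ f - 1 := X_dvd_iff.2 (by simp [hf])
  obtain rfl : f = 1 + X * g := sub_eq_iff_eq_add'.1 hg
  simp_rw [coeff_one_add_X_mul_pow, Rat.cast_sum, Rat.cast_mul, Rat.cast_natCast]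
  convert tendsto_sum_choose_mul_div_pow (fun i => ((coeff (k - i) (g ^ i) : ℚ) : ℝ)) k using 2
  simp

theorem Filter.Tendsto.div_pow_comp_sub_one {u : ℕ → ℝ} {k : ℕ} {L : ℝ}
    (h : Tendsto (fun m : ℕ => u m / (m : ℝ) ^ k) atTop (𝓝 L)) :
    Tendsto (fun n : ℕ => u (n - 1) / (n : ℝ) ^ k) atTop (𝓝 L) := by
  rw [← tendsto_add_atTop_iff_nat 1]
  have hshift := h.mul ((tendsto_natCast_div_add_atTop (1 : ℝ)).pow k)
  rw [one_pow, mul_one] at hshift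
  refine hshift.congr' ?_
  filter_upwards [eventually_ne_atTop 0] with m hm
  push_cast
  rw [div_pow]
  field_simp

theorem constantCoeff_expm1DivT : constantCoeff expm1DivT = 1 := by
  simp [expm1DivT, ← coeff_zero_eq_constantCoeff_apply]

theorem coeff_one_expm1DivT : coeff 1 expm1DivT = 2⁻¹ := by
  simp [expm1DivT]

/-- Let `γ_{n,k}` be the coefficient of `t^k` in `((e^t − 1)/t)^{n−1} ∈ ℚ⟦t⟧`.
Then for every fixed `k`, `lim_{n→∞} γ_{n,k}/n^k = 1/(2^k·k!)`. -/
theorem gamma_coeff_limit (k : ℕ) :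
    Tendsto (fun n : ℕ =>
        ((PowerSeries.coeff (R := ℚ) k (expm1DivT ^ (n - 1)) : ℚ) : ℝ) / (n : ℝ) ^ k)
      atTop
      (nhds (1 / ((2 : ℝ) ^ k * (k.factorial : ℝ)))) := by
  convert (tendsto_coeff_pow_div_pow constantCoeff_expm1DivT k).div_pow_comp_sub_one using 2
  simp [coeff_one_expm1DivT, div_eq_mul_inv, mul_comm]
end
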